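/- Let K be a field, δ ∈ K and n ≥ 2, with quantum integers [k] defined by [0] = 0, [1] = 1, [k+1] = δ·[k] − [k−1], and assume [k] ≠ 0 for all 2 ≤ k ≤ n. Let ι : TL_{n−1}(K, δ) → TL_n(K, δ) be the K-algebra homomorphism sending e_i to e_i for i = 1, …, n−2. If p ∈ TL_{n−1}(K, δ) is a Jones–Wenzl projector, then the element q = ι(p) − ([n−1]/[n]) · ι(p) * e_{n−1} * ι(p) is a Jones–Wenzl projector in TL_n(K, δ). -/
import Mathlib


/-- The Temperley–Lieb relations on the free algebra on `n - 1` generators: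
`eᵢ² = δ·eᵢ`, `eᵢeⱼeᵢ = eᵢ` for `|i - j| = 1`, and `eᵢeⱼ = eⱼeᵢ` for `|i - j| ≥ 2`. -/
inductive TLRel (K : Type*) [Field K] (δ : K) (n : ℕ) :
    FreeAlgebra K (Fin (n - 1)) → FreeAlgebra K (Fin (n - 1)) → Prop
  | square (i : Fin (n - 1)) :
      TLRel K δ n (FreeAlgebra.ι K i * FreeAlgebra.ι K i) (δ • FreeAlgebra.ι K i)
  | adjacent (i j : Fin (n - 1)) (h : (i : ℕ) + 1 = j ∨ (j : ℕ) + 1 = i) :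
      TLRel K δ n (FreeAlgebra.ι K i * FreeAlgebra.ι K j * FreeAlgebra.ι K i)
        (FreeAlgebra.ι K i)
  | distant (i j : Fin (n - 1)) (h : (i : ℕ) + 2 ≤ j ∨ (j : ℕ) + 2 ≤ i) :
      TLRel K δ n (FreeAlgebra.ι K i * FreeAlgebra.ι K j)
        (FreeAlgebra.ι K j * FreeAlgebra.ι K i)

/-- The Temperley–Lieb algebra `TL_n(K, δ)`. -/
abbrev TL (K : Type*) [Field K] (δ : K) (n : ℕ) : Type _ := RingQuot (TLRel K δ n)

/-- The generator `e_i` of the Temperley–Lieb algebra `TL_n(K, δ)`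
(indices `i : Fin (n - 1)` correspond to `e_1, …, e_{n-1}`). -/
noncomputable def TLe (K : Type*) [Field K] (δ : K) (n : ℕ) (i : Fin (n - 1)) :
    TL K δ n :=
  RingQuot.mkAlgHom K (TLRel K δ n) (FreeAlgebra.ι K i)


/-- The quantum integers `[k] ∈ K` associated to `δ`:
`[0] = 0`, `[1] = 1`, `[k+1] = δ·[k] − [k−1]`. -/
def qint {K : Type*} [Field K] (δ : K) : ℕ → K
  | 0 => 0
  | 1 => 1
  | (k + 2) => δ * qint δ (k + 1) - qint δ k

section JWaux

variable {K : Type*} [Field K] (δ : K) (n : ℕ)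

/-- `Ee δ n k` is the generator `e_{k+1}` of `TL_n`, or `0` out of range. -/
noncomputable def Ee (k : ℕ) : TL K δ n :=
  if h : k < n - 1 then TLe K δ n ⟨k, h⟩ else 0

lemma TLe_sq (i : Fin (n - 1)) :
    TLe K δ n i * TLe K δ n i = δ • TLe K δ n i := by
  unfold TLe
  rw [← map_mul, RingQuot.mkAlgHom_rel K (TLRel.square i), map_smul]

lemma Ee_sq (k : ℕ) : Ee δ n k * Ee δ n k = δ • Ee δ n k := by
  unfold Ee
  split
  · exact TLe_sq δ n _
  · simp

lemma TLe_adj (i j : Fin (n - 1)) (h : (i : ℕ) + 1 = j ∨ (j : ℕ) + 1 = i) :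
    TLe K δ n i * TLe K δ n j * TLe K δ n i = TLe K δ n i := by
  unfold TLe
  rw [← map_mul, ← map_mul, RingQuot.mkAlgHom_rel K (TLRel.adjacent i j h)]

lemma Ee_adj (k : ℕ) (h : k + 1 < n - 1) :
    Ee δ n (k + 1) * Ee δ n k * Ee δ n (k + 1) = Ee δ n (k + 1) := by
  have hk : k < n - 1 := by omega
  unfold Ee
  rw [dif_pos h, dif_pos hk]
  exact TLe_adj δ n ⟨k + 1, h⟩ ⟨k, hk⟩ (Or.inr rfl)

lemma TLe_comm (i j : Fin (n - 1)) (h : (i : ℕ) + 2 ≤ j ∨ (j : ℕ) + 2 ≤ i) :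
    TLe K δ n i * TLe K δ n j = TLe K δ n j * TLe K δ n i := by
  unfold TLe
  rw [← map_mul, RingQuot.mkAlgHom_rel K (TLRel.distant i j h), map_mul]

lemma Ee_comm (j k : ℕ) (h : j + 2 ≤ k ∨ k + 2 ≤ j) :
    Ee δ n j * Ee δ n k = Ee δ n k * Ee δ n j := by
  unfold Ee
  split
  · split
    · exact TLe_comm δ n _ _ h
    · simp
  · simp

/-- Nonempty words in the generators `e_1, …, e_{m-1}`. -/
def TLwords (m : ℕ) : Set (TL K δ n) :=
  {x | ∃ l : List ℕ, l ≠ [] ∧ (∀ j ∈ l, j + 1 < m) ∧ x = (l.map (Ee δ n)).prod}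

/-- The span of nonempty words in the generators `e_1, …, e_{m-1}`. -/
noncomputable def TLW (m : ℕ) : Submodule K (TL K δ n) :=
  Submodule.span K (TLwords δ n m)

lemma TLwords_mono {m m' : ℕ} (h : m ≤ m') : TLwords δ n m ⊆ TLwords δ n m' := by
  rintro x ⟨l, h1, h2, rfl⟩
  exact ⟨l, h1, fun j hj => lt_of_lt_of_le (h2 j hj) h, rfl⟩

lemma TLW_mono {m m' : ℕ} (h : m ≤ m') : TLW δ n m ≤ TLW δ n m' :=
  Submodule.span_mono (TLwords_mono δ n h)

lemma Ee_mem_TLwords {j m : ℕ} (h : j + 1 < m) : Ee δ n j ∈ TLwords δ n m :=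
  ⟨[j], by simp, by simpa using h, by simp⟩

lemma TLwords_mul {m : ℕ} {x y : TL K δ n} (hx : x ∈ TLwords δ n m)
    (hy : y ∈ TLwords δ n m) : x * y ∈ TLwords δ n m := by
  obtain ⟨l1, h1, h2, rfl⟩ := hx
  obtain ⟨l2, g1, g2, rfl⟩ := hy
  refine ⟨l1 ++ l2, by simp [h1], ?_, by simp⟩
  intro j hj
  rcases List.mem_append.mp hj with h | h
  · exact h2 j h
  · exact g2 j h

lemma TLW_mul_mem {m : ℕ} {x y : TL K δ n} (hx : x ∈ TLW δ n m)
    (hy : y ∈ TLW δ n m) : x * y ∈ TLW δ n m := by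
  have hle : TLW δ n m * TLW δ n m ≤ TLW δ n m := by
    rw [TLW, Submodule.span_mul_span]
    refine Submodule.span_le.mpr ?_
    rintro z ⟨a, ha, b, hb, rfl⟩
    exact Submodule.subset_span (TLwords_mul δ n ha hb)
  exact hle (Submodule.mul_mem_mul hx hy)

lemma mul_TLW_zero {m : ℕ} {q : TL K δ n}
    (h : ∀ j, j + 1 < m → q * Ee δ n j = 0) {x : TL K δ n}
    (hx : x ∈ TLW δ n m) : q * x = 0 := by
  induction hx using Submodule.span_induction with
  | mem x hx =>
    obtain ⟨l, h1, h2, rfl⟩ := hx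
    cases l with
    | nil => exact absurd rfl h1
    | cons j t =>
      rw [List.map_cons, List.prod_cons, ← mul_assoc, h j (h2 j (by simp)),
        zero_mul]
  | zero => rw [mul_zero]
  | add a b _ _ ha hb => rw [mul_add, ha, hb, add_zero]
  | smul c a _ ha => rw [mul_smul_comm, ha, smul_zero]

lemma TLW_mul_zero {m : ℕ} {q : TL K δ n}
    (h : ∀ j, j + 1 < m → Ee δ n j * q = 0) {x : TL K δ n}
    (hx : x ∈ TLW δ n m) : x * q = 0 := by
  induction hx using Submodule.span_induction with
  | mem x hx =>
    obtain ⟨l, h1, h2, rfl⟩ := hx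
    rcases l.eq_nil_or_concat with rfl | ⟨t, j, rfl⟩
    · exact absurd rfl h1
    · rw [List.concat_eq_append, List.map_append, List.prod_append, List.map_singleton,
        List.prod_singleton, mul_assoc, h j (h2 j (by simp)), mul_zero]
  | zero => rw [zero_mul]
  | add a b _ _ ha hb => rw [add_mul, ha, hb, add_zero]
  | smul c a _ ha => rw [smul_mul_assoc, ha, smul_zero]

lemma TLW_commute {m : ℕ} {c : TL K δ n}
    (h : ∀ j, j + 1 < m → Commute c (Ee δ n j)) {x : TL K δ n}
    (hx : x ∈ TLW δ n m) : Commute c x := by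
  induction hx using Submodule.span_induction with
  | mem x hx =>
    obtain ⟨l, h1, h2, rfl⟩ := hx
    refine Commute.list_prod_right _ _ ?_
    intro y hy
    obtain ⟨j, hj, rfl⟩ := List.mem_map.mp hy
    exact h j (h2 j hj)
  | zero => exact Commute.zero_right _
  | add a b _ _ ha hb => exact ha.add_right hb
  | smul c' a _ ha => exact ha.smul_right c'

/-- The canonical Jones–Wenzl projectors, defined by Wenzl's recursion inside `TL_n`. -/
noncomputable def jw : ℕ → TL K δ n
  | 0 => 1
  | (m + 1) =>
      jw m - (qint δ m / qint δ (m + 1)) • (jw m * Ee δ n (m - 1) * jw m)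

lemma jw_one : jw δ n 1 = 1 := by
  show jw δ n 0 - (qint δ 0 / qint δ 1) • _ = 1
  simp [jw, qint]

theorem jw_main (hq : ∀ k, 2 ≤ k → k ≤ n → qint δ k ≠ 0) :
    ∀ m, 1 ≤ m → m ≤ n →
      (jw δ n m - 1 ∈ TLW δ n m) ∧
      (∀ j, j + 1 < m → Ee δ n j * jw δ n m = 0 ∧ jw δ n m * Ee δ n j = 0) ∧
      (m < n → Ee δ n (m - 1) * jw δ n m * Ee δ n (m - 1) =
          (qint δ (m + 1) / qint δ m) • (jw δ n (m - 1) * Ee δ n (m - 1))) := by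
  intro m
  induction m using Nat.strong_induction_on with
  | _ m IH =>
  intro hm1 hmn
  obtain _ | m := m
  · exact absurd hm1 (by omega)
  obtain _ | t := m
  · -- base case m = 1
    refine ⟨?_, fun j hj => absurd hj (by omega), fun _ => ?_⟩
    · show jw δ n 1 - 1 ∈ TLW δ n 1
      rw [jw_one, sub_self]
      exact (TLW δ n 1).zero_mem
    · show Ee δ n 0 * jw δ n 1 * Ee δ n 0 =
        (qint δ 2 / qint δ 1) • (jw δ n 0 * Ee δ n 0)
      have h12 : qint δ 2 / qint δ 1 = δ := by simp [qint]
      rw [jw_one, mul_one, Ee_sq, h12, show jw δ n 0 = 1 from rfl, one_mul]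
  · -- inductive step: m = t + 2
    obtain ⟨ha, hb, hH⟩ := IH (t + 1) (by omega) (by omega) (by omega)
    have hq1 : qint δ (t + 1) ≠ 0 := by
      rcases t with _ | u
      · simp [qint]
      · exact hq (u + 2) (by omega) (by omega)
    have hq2 : qint δ (t + 2) ≠ 0 := hq (t + 2) (by omega) (by omega)
    have hjw : jw δ n (t + 1 + 1)
        = jw δ n (t + 1) - (qint δ (t + 1) / qint δ (t + 2)) •
            (jw δ n (t + 1) * Ee δ n t * jw δ n (t + 1)) := rfl
    have hmul : jw δ n (t + 1) * jw δ n (t + 1) = jw δ n (t + 1) := by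
      have h0 : jw δ n (t + 1) * (jw δ n (t + 1) - 1) = 0 :=
        mul_TLW_zero δ n (fun j hj => (hb j hj).2) ha
      rw [mul_sub, mul_one, sub_eq_zero] at h0
      exact h0
    have hH' : Ee δ n t * jw δ n (t + 1) * Ee δ n t =
        (qint δ (t + 2) / qint δ (t + 1)) • (jw δ n t * Ee δ n t) := by
      have := hH (by omega)
      simpa using this
    have hcmu : (qint δ (t + 1) / qint δ (t + 2)) *
        (qint δ (t + 2) / qint δ (t + 1)) = 1 := by
      field_simp
    -- (a) : ideal membership
    have hEW : Ee δ n t ∈ TLW δ n (t + 2) :=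
      Submodule.subset_span (Ee_mem_TLwords δ n (by omega))
    have hqW : jw δ n (t + 1) - 1 ∈ TLW δ n (t + 2) := TLW_mono δ n (by omega) ha
    have hprod : jw δ n (t + 1) * Ee δ n t * jw δ n (t + 1) ∈ TLW δ n (t + 2) := by
      have hexp : jw δ n (t + 1) * Ee δ n t * jw δ n (t + 1) =
          (jw δ n (t + 1) - 1) * Ee δ n t * (jw δ n (t + 1) - 1) +
            (jw δ n (t + 1) - 1) * Ee δ n t +
            Ee δ n t * (jw δ n (t + 1) - 1) + Ee δ n t := by
        simp only [sub_mul, mul_sub, mul_one, one_mul]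
        abel
      rw [hexp]
      exact add_mem (add_mem (add_mem
        (TLW_mul_mem δ n (TLW_mul_mem δ n hqW hEW) hqW)
        (TLW_mul_mem δ n hqW hEW)) (TLW_mul_mem δ n hEW hqW)) hEW
    have haNew : jw δ n (t + 1 + 1) - 1 ∈ TLW δ n (t + 1 + 1) := by
      rw [hjw, sub_right_comm]
      exact sub_mem hqW (Submodule.smul_mem _ _ hprod)
    -- (b) : killing properties
    have hz : (jw δ n t - 1) * (Ee δ n t * jw δ n (t + 1)) = 0 := by
      rcases Nat.eq_zero_or_pos t with rfl | ht
      · rw [show jw δ n 0 = 1 from rfl, sub_self, zero_mul]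
      · obtain ⟨ha2, _, _⟩ := IH t (by omega) ht (by omega)
        refine TLW_mul_zero δ n ?_ ha2
        intro j hj
        rw [← mul_assoc, Ee_comm δ n j t (Or.inl (by omega)), mul_assoc,
          (hb j (by omega)).1, mul_zero]
    have hz2 : jw δ n (t + 1) * jw δ n t = jw δ n (t + 1) := by
      rcases Nat.eq_zero_or_pos t with rfl | ht
      · rw [show jw δ n 0 = 1 from rfl, mul_one]
      · obtain ⟨ha2, _, _⟩ := IH t (by omega) ht (by omega)
        have h0 : jw δ n (t + 1) * (jw δ n t - 1) = 0 :=
          mul_TLW_zero δ n (fun j hj => (hb j (by omega)).2) ha2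
        rw [mul_sub, mul_one, sub_eq_zero] at h0
        exact h0
    have hkL : ∀ j, j + 1 < t + 1 + 1 → Ee δ n j * jw δ n (t + 1 + 1) = 0 := by
      intro j hj
      rcases Nat.lt_or_ge (j + 1) (t + 1) with hlt | hge
      · have h1 : Ee δ n j * jw δ n (t + 1) = 0 := (hb j hlt).1
        rw [hjw, mul_sub, mul_smul_comm]
        simp only [← mul_assoc]
        rw [h1, zero_mul, zero_mul, smul_zero, sub_zero]
      · have hjt : j = t := by omega
        subst hjt
        calc Ee δ n j * jw δ n (j + 1 + 1)
            = Ee δ n j * jw δ n (j + 1) - (qint δ (j + 1) / qint δ (j + 2)) •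
              (Ee δ n j * jw δ n (j + 1) * Ee δ n j * jw δ n (j + 1)) := by
              rw [hjw, mul_sub, mul_smul_comm]
              simp only [← mul_assoc]
          _ = Ee δ n j * jw δ n (j + 1) - (qint δ (j + 1) / qint δ (j + 2)) •
              ((qint δ (j + 2) / qint δ (j + 1)) •
                (jw δ n j * (Ee δ n j * jw δ n (j + 1)))) := by
              rw [hH', smul_mul_assoc, mul_assoc]
          _ = Ee δ n j * jw δ n (j + 1) - jw δ n j * (Ee δ n j * jw δ n (j + 1)) := by
              rw [smul_smul, hcmu, one_smul]
          _ = -((jw δ n j - 1) * (Ee δ n j * jw δ n (j + 1))) := by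
              rw [sub_mul, one_mul, neg_sub]
          _ = 0 := by rw [hz, neg_zero]
    have hkR : ∀ j, j + 1 < t + 1 + 1 → jw δ n (t + 1 + 1) * Ee δ n j = 0 := by
      intro j hj
      rcases Nat.lt_or_ge (j + 1) (t + 1) with hlt | hge
      · have h1 : jw δ n (t + 1) * Ee δ n j = 0 := (hb j hlt).2
        rw [hjw, sub_mul, smul_mul_assoc, mul_assoc, mul_assoc, h1, mul_zero,
          mul_zero, smul_zero, sub_zero]
      · have hjt : j = t := by omega
        subst hjt
        have hassoc : jw δ n (j + 1) * Ee δ n j * jw δ n (j + 1) * Ee δ n j =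
            jw δ n (j + 1) * (Ee δ n j * jw δ n (j + 1) * Ee δ n j) := by
          noncomm_ring
        calc jw δ n (j + 1 + 1) * Ee δ n j
            = jw δ n (j + 1) * Ee δ n j - (qint δ (j + 1) / qint δ (j + 2)) •
              (jw δ n (j + 1) * (Ee δ n j * jw δ n (j + 1) * Ee δ n j)) := by
              rw [hjw, sub_mul, smul_mul_assoc, hassoc]
          _ = jw δ n (j + 1) * Ee δ n j - (qint δ (j + 1) / qint δ (j + 2)) •
              ((qint δ (j + 2) / qint δ (j + 1)) •
                (jw δ n (j + 1) * (jw δ n j * Ee δ n j))) := by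
              rw [hH', mul_smul_comm]
          _ = jw δ n (j + 1) * Ee δ n j -
                jw δ n (j + 1) * jw δ n j * Ee δ n j := by
              rw [smul_smul, hcmu, one_smul, mul_assoc]
          _ = 0 := by rw [hz2, sub_self]
    -- (H) : the Wenzl identity at level t + 2
    refine ⟨haNew, fun j hj => ⟨hkL j hj, hkR j hj⟩, ?_⟩
    intro h2n
    show Ee δ n (t + 1) * jw δ n (t + 1 + 1) * Ee δ n (t + 1) =
      (qint δ (t + 3) / qint δ (t + 2)) • (jw δ n (t + 1) * Ee δ n (t + 1))
    have hcom : Commute (Ee δ n (t + 1)) (jw δ n (t + 1)) := by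
      have h1 : Commute (Ee δ n (t + 1)) (jw δ n (t + 1) - 1) := by
        refine TLW_commute δ n ?_ ha
        intro j hj
        exact Ee_comm δ n (t + 1) j (Or.inr (by omega))
      have := h1.add_right (Commute.one_right (Ee δ n (t + 1)))
      simpa using this
    have FqF : Ee δ n (t + 1) * jw δ n (t + 1) * Ee δ n (t + 1) =
        δ • (jw δ n (t + 1) * Ee δ n (t + 1)) := by
      rw [hcom.eq, mul_assoc, Ee_sq, mul_smul_comm]
    have hX : Ee δ n (t + 1) * (jw δ n (t + 1) * Ee δ n t * jw δ n (t + 1)) *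
        Ee δ n (t + 1) = jw δ n (t + 1) * Ee δ n (t + 1) := by
      calc Ee δ n (t + 1) * (jw δ n (t + 1) * Ee δ n t * jw δ n (t + 1)) *
            Ee δ n (t + 1)
          = (Ee δ n (t + 1) * jw δ n (t + 1)) *
              (Ee δ n t * (jw δ n (t + 1) * Ee δ n (t + 1))) := by noncomm_ring
        _ = jw δ n (t + 1) * (Ee δ n (t + 1) * Ee δ n t *
              (jw δ n (t + 1) * Ee δ n (t + 1))) := by
            rw [hcom.eq]; noncomm_ring
        _ = jw δ n (t + 1) * (Ee δ n (t + 1) * Ee δ n t *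
              (Ee δ n (t + 1) * jw δ n (t + 1))) := by rw [← hcom.eq]
        _ = jw δ n (t + 1) * (Ee δ n (t + 1) * Ee δ n t * Ee δ n (t + 1)) *
              jw δ n (t + 1) := by noncomm_ring
        _ = jw δ n (t + 1) * Ee δ n (t + 1) * jw δ n (t + 1) := by
            rw [Ee_adj δ n t (by omega)]
        _ = jw δ n (t + 1) * (jw δ n (t + 1) * Ee δ n (t + 1)) := by
            rw [mul_assoc, hcom.eq]
        _ = jw δ n (t + 1) * Ee δ n (t + 1) := by rw [← mul_assoc, hmul]
    have hq3 : qint δ (t + 3) = δ * qint δ (t + 2) - qint δ (t + 1) := rfl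
    have hcoef : δ - qint δ (t + 1) / qint δ (t + 2) =
        qint δ (t + 3) / qint δ (t + 2) := by
      rw [hq3]
      field_simp
    calc Ee δ n (t + 1) * jw δ n (t + 1 + 1) * Ee δ n (t + 1)
        = Ee δ n (t + 1) * jw δ n (t + 1) * Ee δ n (t + 1) -
            (qint δ (t + 1) / qint δ (t + 2)) •
              (Ee δ n (t + 1) * (jw δ n (t + 1) * Ee δ n t * jw δ n (t + 1)) *
                Ee δ n (t + 1)) := by
          rw [hjw, mul_sub, sub_mul, mul_smul_comm, smul_mul_assoc]
      _ = δ • (jw δ n (t + 1) * Ee δ n (t + 1)) -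
            (qint δ (t + 1) / qint δ (t + 2)) •
              (jw δ n (t + 1) * Ee δ n (t + 1)) := by rw [FqF, hX]
      _ = (δ - qint δ (t + 1) / qint δ (t + 2)) •
            (jw δ n (t + 1) * Ee δ n (t + 1)) := (sub_smul δ _ _).symm
      _ = (qint δ (t + 3) / qint δ (t + 2)) •
            (jw δ n (t + 1) * Ee δ n (t + 1)) := by rw [hcoef]

/-- Words allowing the empty word. -/
noncomputable def TLW1 (m : ℕ) : Submodule K (TL K δ n) :=
  Submodule.span K (insert 1 (TLwords δ n m))

lemma TLwords1_mul {m : ℕ} {x y : TL K δ n}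
    (hx : x ∈ insert (1 : TL K δ n) (TLwords δ n m))
    (hy : y ∈ insert (1 : TL K δ n) (TLwords δ n m)) :
    x * y ∈ insert (1 : TL K δ n) (TLwords δ n m) := by
  rw [Set.mem_insert_iff] at hx hy ⊢
  rcases hx with rfl | hx
  · rcases hy with rfl | hy
    · exact Or.inl (one_mul 1)
    · rw [one_mul]; exact Or.inr hy
  · rcases hy with rfl | hy
    · rw [mul_one]; exact Or.inr hx
    · exact Or.inr (TLwords_mul δ n hx hy)

lemma TLW1_mul_mem {m : ℕ} {x y : TL K δ n} (hx : x ∈ TLW1 δ n m)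
    (hy : y ∈ TLW1 δ n m) : x * y ∈ TLW1 δ n m := by
  have hle : TLW1 δ n m * TLW1 δ n m ≤ TLW1 δ n m := by
    rw [TLW1, Submodule.span_mul_span]
    refine Submodule.span_le.mpr ?_
    rintro z ⟨a, ha, b, hb, rfl⟩
    exact Submodule.subset_span (TLwords1_mul δ n ha hb)
  exact hle (Submodule.mul_mem_mul hx hy)

lemma TLW1_mul_TLW {m : ℕ} {x y : TL K δ n} (hx : x ∈ TLW1 δ n m)
    (hy : y ∈ TLW δ n m) : x * y ∈ TLW δ n m := by
  have hle : TLW1 δ n m * TLW δ n m ≤ TLW δ n m := by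
    rw [TLW1, TLW, Submodule.span_mul_span]
    refine Submodule.span_le.mpr ?_
    rintro z ⟨a, ha, b, hb, rfl⟩
    rcases Set.mem_insert_iff.mp ha with rfl | ha
    · simpa using Submodule.subset_span hb
    · exact Submodule.subset_span (TLwords_mul δ n ha hb)
  exact hle (Submodule.mul_mem_mul hx hy)

lemma TLW_mul_TLW1 {m : ℕ} {x y : TL K δ n} (hx : x ∈ TLW δ n m)
    (hy : y ∈ TLW1 δ n m) : x * y ∈ TLW δ n m := by
  have hle : TLW δ n m * TLW1 δ n m ≤ TLW δ n m := by
    rw [TLW1, TLW, Submodule.span_mul_span]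
    refine Submodule.span_le.mpr ?_
    rintro z ⟨a, ha, b, hb, rfl⟩
    rcases Set.mem_insert_iff.mp hb with rfl | hb
    · simpa using Submodule.subset_span ha
    · exact Submodule.subset_span (TLwords_mul δ n ha hb)
  exact hle (Submodule.mul_mem_mul hx hy)

end JWaux

/-- Wenzl's recurrence: if `p ∈ TL_{n-1}(K, δ)` is a Jones–Wenzl projector and
`ι : TL_{n-1}(K, δ) → TL_n(K, δ)` is the `K`-algebra homomorphism sending each
generator `e_i` to `e_i`, then, assuming `[2], …, [n]` are nonzero,
`q = ι(p) − ([n−1]/[n]) · ι(p) e_{n-1} ι(p)` is a Jones–Wenzl projector in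
`TL_n(K, δ)`. -/
theorem TL_jones_wenzl_recurrence (K : Type*) [Field K] (δ : K) (n : ℕ) (hn : 2 ≤ n)
    (hq : ∀ k, 2 ≤ k → k ≤ n → qint δ k ≠ 0)
    (ι : TL K δ (n - 1) →ₐ[K] TL K δ n)
    (hι : ∀ i : Fin (n - 1 - 1),
      ι (TLe K δ (n - 1) i) = TLe K δ n (Fin.castLE (Nat.sub_le (n - 1) 1) i))
    (p : TL K δ (n - 1))
    (hp1 : p - 1 ∈ TwoSidedIdeal.span (Set.range (TLe K δ (n - 1))))
    (hp2 : ∀ i : Fin (n - 1 - 1),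
      TLe K δ (n - 1) i * p = 0 ∧ p * TLe K δ (n - 1) i = 0) :
    (ι p - (qint δ (n - 1) / qint δ n) •
        (ι p * TLe K δ n ⟨n - 2, by omega⟩ * ι p)) - 1 ∈
      TwoSidedIdeal.span (Set.range (TLe K δ n)) ∧
    ∀ i : Fin (n - 1),
      TLe K δ n i *
          (ι p - (qint δ (n - 1) / qint δ n) •
            (ι p * TLe K δ n ⟨n - 2, by omega⟩ * ι p)) = 0 ∧
      (ι p - (qint δ (n - 1) / qint δ n) •
          (ι p * TLe K δ n ⟨n - 2, by omega⟩ * ι p)) * TLe K δ n i = 0 := by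
  have hEeq : ∀ (j : ℕ) (h : j < n - 1), Ee δ n j = TLe K δ n ⟨j, h⟩ :=
    fun j h => dif_pos h
  -- the generators `e_1, …, e_{n-2}` kill `ι p`
  have hPE : ∀ j, j + 1 < n - 1 → Ee δ n j * ι p = 0 ∧ ι p * Ee δ n j = 0 := by
    intro j hj
    have hj' : j < n - 1 - 1 := by omega
    have hg : Ee δ n j = ι (TLe K δ (n - 1) ⟨j, hj'⟩) := by
      rw [hι ⟨j, hj'⟩]
      exact hEeq j (by omega)
    constructor
    · rw [hg, ← map_mul, (hp2 ⟨j, hj'⟩).1, map_zero]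
    · rw [hg, ← map_mul, (hp2 ⟨j, hj'⟩).2, map_zero]
  -- the image of `ι` lies in the span of words
  have hι1 : ∀ x : TL K δ (n - 1), ι x ∈ TLW1 δ n (n - 1) := by
    intro x
    obtain ⟨y, rfl⟩ := RingQuot.mkAlgHom_surjective K (TLRel K δ (n - 1)) x
    induction y using FreeAlgebra.induction with
    | grade0 r =>
      rw [AlgHom.commutes, AlgHom.commutes, Algebra.algebraMap_eq_smul_one]
      exact Submodule.smul_mem _ _ (Submodule.subset_span (Set.mem_insert _ _))
    | grade1 i =>
      rw [show (RingQuot.mkAlgHom K (TLRel K δ (n - 1)) (FreeAlgebra.ι K i)) =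
        TLe K δ (n - 1) i from rfl, hι i]
      have hlt : (i : ℕ) + 1 < n - 1 := by have := i.isLt; omega
      have hmem := Ee_mem_TLwords δ n hlt
      rw [hEeq i.val (by omega)] at hmem
      exact Submodule.subset_span (Set.mem_insert_iff.mpr (Or.inr hmem))
    | mul a b ha hb =>
      rw [map_mul, map_mul]
      exact TLW1_mul_mem δ n ha hb
    | add a b ha hb =>
      rw [map_add, map_add]
      exact add_mem ha hb
  -- `ι p - 1` lies in the span of nonempty words in `e_1, …, e_{n-2}`
  have hP1 : ι p - 1 ∈ TLW δ n (n - 1) := by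
    let T : TwoSidedIdeal (TL K δ (n - 1)) := TwoSidedIdeal.mk'
      {x | ι x ∈ TLW δ n (n - 1)}
      (by simp only [Set.mem_setOf_eq, map_zero]; exact zero_mem _)
      (fun {x y} hx hy => by
        simp only [Set.mem_setOf_eq, map_add]; exact add_mem hx hy)
      (fun {x} hx => by
        simp only [Set.mem_setOf_eq, map_neg]; exact neg_mem hx)
      (fun {x y} hy => by
        simp only [Set.mem_setOf_eq, map_mul]; exact TLW1_mul_TLW δ n (hι1 x) hy)
      (fun {x y} hx => by
        simp only [Set.mem_setOf_eq, map_mul]; exact TLW_mul_TLW1 δ n hx (hι1 y))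
    have hsub : Set.range (TLe K δ (n - 1)) ⊆ (T : Set _) := by
      rintro _ ⟨i, rfl⟩
      show _ ∈ T
      rw [TwoSidedIdeal.mem_mk']
      show ι (TLe K δ (n - 1) i) ∈ TLW δ n (n - 1)
      rw [hι i]
      have hlt : (i : ℕ) + 1 < n - 1 := by have := i.isLt; omega
      have hmem := Ee_mem_TLwords δ n hlt
      rw [hEeq i.val (by omega)] at hmem
      exact Submodule.subset_span hmem
    have hmem : p - 1 ∈ T := TwoSidedIdeal.mem_span_iff.mp hp1 T hsub
    rw [TwoSidedIdeal.mem_mk'] at hmem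
    have : ι (p - 1) ∈ TLW δ n (n - 1) := hmem
    rwa [map_sub, map_one] at this
  -- uniqueness: `ι p` equals the canonical Jones–Wenzl projector
  obtain ⟨ja, jb, -⟩ := jw_main δ n hq (n - 1) (by omega) (by omega)
  have hPjw : ι p = jw δ n (n - 1) := by
    have h1 : (ι p - 1) * jw δ n (n - 1) = 0 :=
      TLW_mul_zero δ n (fun j hj => (jb j hj).1) hP1
    have h2 : ι p * (jw δ n (n - 1) - 1) = 0 :=
      mul_TLW_zero δ n (fun j hj => (hPE j hj).2) ja
    rw [sub_mul, one_mul, sub_eq_zero] at h1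
    rw [mul_sub, mul_one, sub_eq_zero] at h2
    rw [← h2, h1]
  obtain ⟨jan, jbn, -⟩ := jw_main δ n hq n (by omega) le_rfl
  -- identify the element in the statement with `jw n`
  have hQ : ι p - (qint δ (n - 1) / qint δ n) •
      (ι p * TLe K δ n ⟨n - 2, by omega⟩ * ι p) = jw δ n n := by
    have hE2 : TLe K δ n ⟨n - 2, by omega⟩ = Ee δ n (n - 2) :=
      (hEeq (n - 2) (by omega)).symm
    have hstep : ∀ m : ℕ, jw δ n (m + 1) = jw δ n m -
        (qint δ m / qint δ (m + 1)) • (jw δ n m * Ee δ n (m - 1) * jw δ n m) :=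
      fun m => rfl
    have e3 : n - 1 + 1 = n := by omega
    have e4 : n - 1 - 1 = n - 2 := by omega
    have hrec : jw δ n n = jw δ n (n - 1) - (qint δ (n - 1) / qint δ n) •
        (jw δ n (n - 1) * Ee δ n (n - 2) * jw δ n (n - 1)) := by
      calc jw δ n n = jw δ n (n - 1 + 1) := by rw [e3]
        _ = jw δ n (n - 1) - (qint δ (n - 1) / qint δ (n - 1 + 1)) •
            (jw δ n (n - 1) * Ee δ n (n - 1 - 1) * jw δ n (n - 1)) := hstep (n - 1)
        _ = _ := by rw [e3, e4]
    rw [hE2, hPjw, hrec]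
  rw [hQ]
  constructor
  · -- ideal membership
    refine Submodule.span_induction ?_ ?_ ?_ ?_ jan
    · rintro x ⟨l, h1, h2, rfl⟩
      cases l with
      | nil => exact absurd rfl h1
      | cons j tl =>
        rw [List.map_cons, List.prod_cons]
        have hj : j < n - 1 := by have := h2 j (by simp); omega
        have hmem : Ee δ n j ∈ TwoSidedIdeal.span (Set.range (TLe K δ n)) := by
          rw [hEeq j hj]
          exact TwoSidedIdeal.subset_span ⟨⟨j, hj⟩, rfl⟩
        exact TwoSidedIdeal.mul_mem_right _ _ _ hmem
    · exact TwoSidedIdeal.zero_mem _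
    · intro a b _ _ ha hb
      exact TwoSidedIdeal.add_mem _ ha hb
    · intro c a _ ha
      rw [Algebra.smul_def]
      exact TwoSidedIdeal.mul_mem_left _ _ _ ha
  · intro i
    have hlt : (i : ℕ) + 1 < n := by have := i.isLt; omega
    have hEi : TLe K δ n i = Ee δ n i.val := by
      rw [hEeq i.val i.isLt]
    exact ⟨by rw [hEi]; exact (jbn i.val hlt).1,
      by rw [hEi]; exact (jbn i.val hlt).2⟩
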